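/- In the braid group B_3, the elements g = σ_1 and h = σ_2² satisfy the relation g h g h = h g h g (indeed both sides equal (σ_1 σ_2)³), but g h ≠ h g. Consequently, the subgroup of B_3 generated by g and h is neither abelian nor free of rank 2. -/

import Mathlib

/-- The braid relations on `n` strands, as elements of the free group on the
`n-1` generators `σ_1, …, σ_{n-1}` (indexed by `Fin (n-1)`): the commutation
relations `σ_i σ_j = σ_j σ_i` for `|i - j| ≥ 2` and the braid relations
`σ_i σ_{i+1} σ_i = σ_{i+1} σ_i σ_{i+1}`. -/
def braidRels (n : ℕ) : Set (FreeGroup (Fin (n - 1))) :=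
  {r | ∃ i j : Fin (n - 1), i.val + 2 ≤ j.val ∧
      r = FreeGroup.of i * FreeGroup.of j * (FreeGroup.of i)⁻¹ * (FreeGroup.of j)⁻¹} ∪
  {r | ∃ i j : Fin (n - 1), j.val = i.val + 1 ∧
      r = FreeGroup.of i * FreeGroup.of j * FreeGroup.of i *
        (FreeGroup.of j * FreeGroup.of i * FreeGroup.of j)⁻¹}

/-- The braid group on `n` strands, presented by generators and relations. -/
def BraidGroup (n : ℕ) : Type := PresentedGroup (braidRels n)

instance (n : ℕ) : Group (BraidGroup n) :=
  inferInstanceAs (Group (PresentedGroup (braidRels n)))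

/-- The standard generator `σ_{i+1}` of the braid group. -/
def braidGen {n : ℕ} (i : Fin (n - 1)) : BraidGroup n := PresentedGroup.of i

/-- The transposition `(i, i+1)` in `Perm (Fin n)` associated to the generator `σ_i`. -/
def braidGenPerm (n : ℕ) (i : Fin (n - 1)) : Equiv.Perm (Fin n) :=
  Equiv.swap ⟨i.val, by have := i.isLt; omega⟩ ⟨i.val + 1, by have := i.isLt; omega⟩

private lemma swap_braid_rel {α : Type*} [DecidableEq α] {a b c : α}
    (hab : a ≠ b) (hac : a ≠ c) (hbc : b ≠ c) :
    Equiv.swap a b * Equiv.swap b c * Equiv.swap a b =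
      Equiv.swap b c * Equiv.swap a b * Equiv.swap b c := by
  calc Equiv.swap a b * Equiv.swap b c * Equiv.swap a b
      = Equiv.swap b a * Equiv.swap c b * Equiv.swap b a := by
        rw [Equiv.swap_comm a b, Equiv.swap_comm b c]
    _ = Equiv.swap a c := Equiv.swap_mul_swap_mul_swap hbc.symm hac.symm
    _ = Equiv.swap c a := Equiv.swap_comm a c
    _ = Equiv.swap b c * Equiv.swap a b * Equiv.swap b c :=
        (Equiv.swap_mul_swap_mul_swap hab hac).symm

private lemma swap_disjoint_commute {n : ℕ} {a b c d : Fin n}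
    (h1 : a ≠ c) (h2 : a ≠ d) (h3 : b ≠ c) (h4 : b ≠ d) :
    Commute (Equiv.swap a b) (Equiv.swap c d) := by
  apply Equiv.Perm.Disjoint.commute
  intro x
  by_cases hxa : x = a
  · right; rw [hxa]; exact Equiv.swap_apply_of_ne_of_ne h1 h2
  by_cases hxb : x = b
  · right; rw [hxb]; exact Equiv.swap_apply_of_ne_of_ne h3 h4
  · left; exact Equiv.swap_apply_of_ne_of_ne hxa hxb

lemma braidRels_hold (n : ℕ) : ∀ r ∈ braidRels n, FreeGroup.lift (braidGenPerm n) r = 1 := by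
  rintro r (⟨i, j, hij, rfl⟩ | ⟨i, j, hij, rfl⟩) <;>
      simp only [map_mul, map_inv, FreeGroup.lift_apply_of, braidGenPerm]
  · have hcomm : Commute
        (Equiv.swap (⟨i.val, by have := i.isLt; omega⟩ : Fin n)
          ⟨i.val + 1, by have := i.isLt; omega⟩)
        (Equiv.swap (⟨j.val, by have := j.isLt; omega⟩ : Fin n)
          ⟨j.val + 1, by have := j.isLt; omega⟩) :=
      swap_disjoint_commute (by simp [Fin.ext_iff]; omega) (by simp [Fin.ext_iff]; omega)
        (by simp [Fin.ext_iff]; omega) (by simp [Fin.ext_iff]; omega)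
    rw [hcomm.eq, mul_inv_cancel_right, mul_inv_cancel]
  · have hj : (⟨j.val, by have := j.isLt; omega⟩ : Fin n) =
        ⟨i.val + 1, by have := i.isLt; omega⟩ := by simp [Fin.ext_iff, hij]
    have hj1 : (⟨j.val + 1, by have := j.isLt; omega⟩ : Fin n) =
        ⟨i.val + 2, by have := j.isLt; omega⟩ := by simp [Fin.ext_iff, hij]
    rw [hj, hj1, mul_inv_eq_one]
    exact swap_braid_rel (by simp [Fin.ext_iff]) (by simp [Fin.ext_iff]) (by simp [Fin.ext_iff])

/-- The natural projection from the braid group to the symmetric group, sending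
`σ_i` to the transposition `(i, i+1)`. -/
def braidPerm (n : ℕ) : BraidGroup n →* Equiv.Perm (Fin n) :=
  PresentedGroup.toGroup (braidRels_hold n)

/-- The pure braid group on `n` strands: the kernel of the projection from the
braid group to the symmetric group. -/
def PureBraidGroup (n : ℕ) : Subgroup (BraidGroup n) := (braidPerm n).ker

/-- The first standard generator `σ₁` of the braid group `B₃` (a half-twist). -/
def sigma1 : BraidGroup 3 := braidGen ⟨0, by omega⟩

/-- The second standard generator `σ₂` of the braid group `B₃`. -/
def sigma2 : BraidGroup 3 := braidGen ⟨1, by omega⟩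

/-!
The braid relation `σ₁σ₂σ₁ = σ₂σ₁σ₂` turns both `σ₁σ₂²σ₁σ₂²` and `σ₂²σ₁σ₂²σ₁` into `(σ₁σ₂)³`,
which commutes with `σ₁` and `σ₂`. It is therefore central in `⟨σ₁, σ₂²⟩`, and it is nontrivial
since its exponent sum is `6`; a free group of rank `2` has trivial centre. That `σ₁` and `σ₂²` do
not commute is already visible in the quotient `PSL₂(𝔽₃) ≅ A₄` of `B₃`.
-/

section GroupIdentities

variable {G : Type*} [Group G] {a b : G}

theorem mul_pow_three_eq_of_braid (h : a * b * a = b * a * b) : (a * b) ^ 3 = (b * a) ^ 3 :=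
  calc (a * b) ^ 3 = (a * b * a) * (b * a * b) := by
        simp only [pow_succ, pow_zero, one_mul, mul_assoc]
    _ = (b * a * b) * (a * b * a) := by rw [h]
    _ = (b * a) ^ 3 := by simp only [pow_succ, pow_zero, one_mul, mul_assoc]

theorem mul_sq_mul_mul_sq_of_braid (h : a * b * a = b * a * b) :
    a * b ^ 2 * a * b ^ 2 = (a * b) ^ 3 :=
  calc a * b ^ 2 * a * b ^ 2 = a * b * (b * a * b) * b := by
        simp only [pow_succ, pow_zero, one_mul, mul_assoc]
    _ = a * b * (a * b * a) * b := by rw [h]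
    _ = (a * b) ^ 3 := by simp only [pow_succ, pow_zero, one_mul, mul_assoc]

theorem sq_mul_mul_sq_mul_of_braid (h : a * b * a = b * a * b) :
    b ^ 2 * a * b ^ 2 * a = (a * b) ^ 3 :=
  calc b ^ 2 * a * b ^ 2 * a = b * (b * a * b) * (b * a) := by
        simp only [pow_succ, pow_zero, one_mul, mul_assoc]
    _ = b * (a * b * a) * (b * a) := by rw [h]
    _ = (b * a) ^ 3 := by simp only [pow_succ, pow_zero, one_mul, mul_assoc]
    _ = (a * b) ^ 3 := (mul_pow_three_eq_of_braid h).symm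

theorem commute_mul_pow_three_left_of_braid (h : a * b * a = b * a * b) :
    Commute a ((a * b) ^ 3) :=
  calc a * (a * b) ^ 3 = a * (b * a) ^ 3 := by rw [mul_pow_three_eq_of_braid h]
    _ = (a * b) ^ 3 * a := by simp only [pow_succ, pow_zero, one_mul, mul_assoc]

theorem commute_mul_pow_three_right_of_braid (h : a * b * a = b * a * b) :
    Commute b ((a * b) ^ 3) :=
  calc b * (a * b) ^ 3 = (b * a) ^ 3 * b := by simp only [pow_succ, pow_zero, one_mul, mul_assoc]
    _ = (a * b) ^ 3 * b := by rw [mul_pow_three_eq_of_braid h]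

end GroupIdentities

theorem braidGen_mul_braidGen_mul_braidGen {n : ℕ} {i j : Fin (n - 1)} (hij : j.val = i.val + 1) :
    braidGen i * braidGen j * braidGen i = braidGen j * braidGen i * braidGen j :=
  PresentedGroup.mk_eq_mk_of_mul_inv_mem (Or.inr ⟨i, j, hij, rfl⟩)

theorem sigma1_mul_sigma2_mul_sigma1 : sigma1 * sigma2 * sigma1 = sigma2 * sigma1 * sigma2 :=
  braidGen_mul_braidGen_mul_braidGen rfl

section BraidThreeLift

variable {G : Type*} [Group G] (a b : G)

theorem braidRels_three_lift_eq_one (h : a * b * a = b * a * b) :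
    ∀ r ∈ braidRels 3, FreeGroup.lift ![a, b] r = 1 := by
  rintro r (⟨i, j, hij, rfl⟩ | ⟨i, j, hij, rfl⟩) <;> fin_cases i <;> fin_cases j <;>
    simp at hij
  simp only [map_mul, map_inv, FreeGroup.lift_apply_of]
  exact mul_inv_eq_one.mpr h

def braidThreeLift (h : a * b * a = b * a * b) : BraidGroup 3 →* G :=
  PresentedGroup.toGroup (braidRels_three_lift_eq_one a b h)

@[simp]
theorem braidThreeLift_sigma1 (h : a * b * a = b * a * b) :
    braidThreeLift a b h sigma1 = a :=
  PresentedGroup.toGroup.of _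

@[simp]
theorem braidThreeLift_sigma2 (h : a * b * a = b * a * b) :
    braidThreeLift a b h sigma2 = b :=
  PresentedGroup.toGroup.of _

end BraidThreeLift

theorem sigma1_mul_sigma2_sq_ne : sigma1 * sigma2 ^ 2 ≠ sigma2 ^ 2 * sigma1 := by
  intro h
  -- `σ₁, σ₂` acting on `ℙ¹(𝔽₃) = {0, 1, 2, ∞ = 3}` through `B₃ → PSL₂(𝔽₃) ≅ A₄`
  have := congrArg (braidThreeLift (c[0, 1, 2] : Equiv.Perm (Fin 4)) c[1, 3, 2] (by decide)) h
  simp only [map_mul, map_pow, braidThreeLift_sigma1, braidThreeLift_sigma2] at this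
  exact absurd this (by decide)

theorem sigma1_mul_sigma2_pow_three_ne_one : (sigma1 * sigma2) ^ 3 ≠ 1 := by
  intro h
  have := congrArg (braidThreeLift (Multiplicative.ofAdd (1 : ℤ)) (.ofAdd 1) rfl) h
  simp only [map_mul, map_pow, map_one, braidThreeLift_sigma1, braidThreeLift_sigma2] at this
  exact absurd this (by decide)

namespace FreeGroup

variable {α : Type*}

theorem toWord_of_mul [DecidableEq α] {a : α} {x : FreeGroup α}
    (hx : ∀ s, x.toWord.head? ≠ some (a, s)) : (of a * x).toWord = (a, true) :: x.toWord := by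
  rw [toWord_mul, toWord_of]
  apply IsReduced.reduce_eq
  rcases hw : x.toWord with _ | ⟨⟨b, s⟩, w⟩
  · exact IsReduced.singleton
  · refine isReduced_cons_cons.mpr ⟨fun hab => ?_, hw ▸ isReduced_toWord⟩
    exact absurd (by simp [hw, show a = b from hab]) (hx s)

theorem exists_toWord_head_of_commute [DecidableEq α] {a : α} {x : FreeGroup α} (hx : x ≠ 1)
    (hxa : Commute (of a) x) : ∃ s, x.toWord.head? = some (a, s) := by
  -- Otherwise `of a * x` has reduced word `(a, true) :: w`, and `x * of a` has one that is a
  -- sublist of `w ++ [(a, true)]`; equal lengths force these lists to agree.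
  by_contra! hhead
  have hne : x.toWord ≠ [] := mt toWord_eq_nil_iff.mp hx
  have hsub : List.Sublist ((a, true) :: x.toWord) (x.toWord ++ [(a, true)]) := by
    simpa [← hxa.eq, toWord_of_mul hhead, toWord_of] using toWord_mul_sublist x (of a)
  have heq := hsub.eq_of_length (by simp)
  apply hhead true
  simpa [List.head?_append_of_ne_nil _ hne] using (congrArg List.head? heq).symm

theorem mem_center_iff_eq_one [Nontrivial α] {x : FreeGroup α} :
    x ∈ Subgroup.center (FreeGroup α) ↔ x = 1 := by
  classical
  refine ⟨fun hx => ?_, fun hx => hx ▸ Subgroup.one_mem _⟩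
  by_contra hx1
  obtain ⟨a, b, hab⟩ := exists_pair_ne α
  obtain ⟨s, hs⟩ := exists_toWord_head_of_commute hx1 (Subgroup.mem_center_iff.mp hx (of a))
  obtain ⟨t, ht⟩ := exists_toWord_head_of_commute hx1 (Subgroup.mem_center_iff.mp hx (of b))
  exact hab (Prod.ext_iff.mp (Option.some_injective _ (hs.symm.trans ht))).1

theorem not_nonempty_mulEquiv_of_mem_center [Nontrivial α] {H : Type*} [Group H] {z : H}
    (hz : z ∈ Subgroup.center H) (hz1 : z ≠ 1) : ¬ Nonempty (H ≃* FreeGroup α) := by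
  rintro ⟨φ⟩
  refine hz1 (φ.map_eq_one_iff.mp (mem_center_iff_eq_one.mp ?_))
  rw [Subgroup.mem_center_iff]
  intro y
  simpa using congrArg φ (Subgroup.mem_center_iff.mp hz (φ.symm y))

end FreeGroup

theorem Subgroup.mk_mem_center_closure {G : Type*} [Group G] {S : Set G} {z : G}
    (hzS : z ∈ closure S) (hz : z ∈ centralizer S) : (⟨z, hzS⟩ : closure S) ∈ center (closure S) :=
  mem_center_iff.mpr fun g => Subtype.ext ((centralizer_closure S ▸ hz) g g.2)

/-- In `B₃`, the half-twist `g = σ₁` and the Dehn twist `h = σ₂²` satisfy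
`ghgh = hghg` (both sides being the central element `(σ₁σ₂)³`) but `gh ≠ hg`; hence
the subgroup `⟨g, h⟩` of `B₃` is neither abelian nor free of rank 2, so the
conclusion of the Main Theorem fails for this extension of `PB₃` by a half-twist. -/
theorem braid_group_halftwist_dehntwist_relation :
    sigma1 * sigma2 ^ 2 * sigma1 * sigma2 ^ 2 = sigma2 ^ 2 * sigma1 * sigma2 ^ 2 * sigma1 ∧
    sigma1 * sigma2 ^ 2 * sigma1 * sigma2 ^ 2 = (sigma1 * sigma2) ^ 3 ∧
    sigma1 * sigma2 ^ 2 ≠ sigma2 ^ 2 * sigma1 ∧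
    ¬ (∀ x y : (Subgroup.closure {sigma1, sigma2 ^ 2} : Subgroup (BraidGroup 3)),
        x * y = y * x) ∧
    ¬ Nonempty ((Subgroup.closure {sigma1, sigma2 ^ 2} : Subgroup (BraidGroup 3)) ≃*
        FreeGroup (Fin 2)) := by
  have hbraid := sigma1_mul_sigma2_mul_sigma1
  have hz := mul_sq_mul_mul_sq_of_braid hbraid
  have hg : sigma1 ∈ Subgroup.closure {sigma1, sigma2 ^ 2} := Subgroup.subset_closure (by simp)
  have hh : sigma2 ^ 2 ∈ Subgroup.closure {sigma1, sigma2 ^ 2} := Subgroup.subset_closure (by simp)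
  refine ⟨hz.trans (sq_mul_mul_sq_mul_of_braid hbraid).symm, hz, sigma1_mul_sigma2_sq_ne,
    fun hcomm => sigma1_mul_sigma2_sq_ne (congrArg Subtype.val (hcomm ⟨_, hg⟩ ⟨_, hh⟩)), ?_⟩
  have hzS : (sigma1 * sigma2) ^ 3 ∈ Subgroup.closure {sigma1, sigma2 ^ 2} :=
    hz ▸ mul_mem (mul_mem (mul_mem hg hh) hg) hh
  have hzcentral : (sigma1 * sigma2) ^ 3 ∈ Subgroup.centralizer {sigma1, sigma2 ^ 2} := by
    simp only [Subgroup.mem_centralizer_iff, Set.mem_insert_iff, Set.mem_singleton_iff,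
      forall_eq_or_imp, forall_eq]
    exact ⟨commute_mul_pow_three_left_of_braid hbraid,
      (commute_mul_pow_three_right_of_braid hbraid).pow_left 2⟩
  exact FreeGroup.not_nonempty_mulEquiv_of_mem_center
    (Subgroup.mk_mem_center_closure hzS hzcentral)
    (fun h => sigma1_mul_sigma2_pow_three_ne_one (congrArg Subtype.val h))
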